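/- arXiv:0911.3347 — 2 statements merged into one kernel-verified Lean document; each statement's English description precedes it below -/
import Mathlib

section
/- Fix n ≥ 2, N ≥ 1, and 1 ≤ θ ≤ n−1. Then any partition of the product space ({0,1}^N)^n into Π_{{θ}}^N-monochromatic boxes has at least (C(n,θ−1) + C(n,θ) + C(n,θ+1))^N = (C(n+1,θ) + C(n,θ+1))^N parts. -/
/-- The Hamming weight of the `j`-th column of an `n × N` Boolean measurement matrix. -/
def colWeight {n N : ℕ} (M : Fin n → Fin N → Bool) (j : Fin N) : ℕ :=
  (Finset.univ.filter fun i => M i j = true).card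

/-- The block delta function `Π_{{θ}}^N`: its `j`-th coordinate is `1` iff the `j`-th
column of `M` has exactly `θ` ones. -/
def blockDelta {n N : ℕ} (θ : ℕ) (M : Fin n → Fin N → Bool) : Fin N → Bool :=
  fun j => decide (colWeight M j = θ)

/-!
A fooling-set argument. Take every matrix whose columns all have weight `θ - 1`, `θ` or `θ + 1`;
there are `(C(n,θ-1) + C(n,θ) + C(n,θ+1))^N` of them. If two of them, `M ≠ M'`, with different
`j`-th column supports `s ≠ t`, lay in a common box, then so would every matrix taking each row
from `M` or from `M'`. Copying a single row `a ∈ s ∆ t` of `M'` into `M` toggles `a` in column `j`,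
and `a` can be chosen so that this changes whether that column has weight `θ`: any `a` when
`|s| = θ`, an `a ∈ t \ s` when `|s| = θ - 1`, an `a ∈ s \ t` when `|s| = θ + 1`. So the box is not
monochromatic, and every part of a monochromatic cover contains at most one of these matrices.
-/

open Finset
open scoped symmDiff

section FoolingSet

variable {κ : Type*} {β : κ → Type*} {γ : Type*}

def IsFoolingSet (F : (∀ k, β k) → γ) (S : Set (∀ k, β k)) : Prop :=
  S.Pairwise fun M M' => ∃ X : ∀ k, β k, (∀ k, X k = M k ∨ X k = M' k) ∧ F X ≠ F M

theorem IsFoolingSet.card_le_of_iUnion_eq_univ {F : (∀ k, β k) → γ} {S : Finset (∀ k, β k)}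
    (hS : IsFoolingSet F S) {ι : Type*} [Fintype ι] {A : ι → ∀ k, Set (β k)}
    (hcover : ⋃ i, {M : ∀ k, β k | ∀ k, M k ∈ A i k} = Set.univ)
    (hmono : ∀ i, ∀ M ∈ {M : ∀ k, β k | ∀ k, M k ∈ A i k},
      ∀ M' ∈ {M : ∀ k, β k | ∀ k, M k ∈ A i k}, F M = F M') :
    #S ≤ Fintype.card ι := by
  have hbox : ∀ M : ∀ k, β k, ∃ i, ∀ k, M k ∈ A i k := fun M =>
    Set.mem_iUnion.mp (hcover.ge (Set.mem_univ M))
  choose box hbox using hbox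
  rw [← card_univ]
  refine card_le_card_of_injOn box (fun _ _ => mem_univ _) fun M hM M' hM' hMM' => ?_
  by_contra hne
  obtain ⟨X, hX, hFX⟩ := hS hM hM' hne
  refine hFX (hmono (box M) X (fun k => ?_) M (hbox M))
  rcases hX k with h | h <;> rw [h]
  · exact hbox M k
  · exact hMM' ▸ hbox M' k

end FoolingSet

section Toggle

variable {α : Type*} [DecidableEq α] {s t : Finset α} {a : α}

theorem Finset.symmDiff_singleton_of_mem (h : a ∈ s) : s ∆ {a} = s.erase a := by
  ext x; by_cases hx : x = a <;> simp [mem_symmDiff, hx, h]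

theorem Finset.symmDiff_singleton_of_notMem (h : a ∉ s) : s ∆ {a} = insert a s := by
  ext x; by_cases hx : x = a <;> simp [mem_symmDiff, hx, h]

theorem Finset.exists_mem_symmDiff_card_symmDiff_singleton_eq_iff_ne {θ : ℕ} (hst : s ≠ t)
    (hs : #s ∈ Icc (θ - 1) (θ + 1)) (ht : #t ∈ Icc (θ - 1) (θ + 1)) :
    ∃ a ∈ s ∆ t, (#(s ∆ {a}) = θ ↔ #s ≠ θ) := by
  rw [mem_Icc] at hs ht
  rcases lt_trichotomy #s θ with hlt | heq | hgt
  · obtain ⟨a, hat, has⟩ : ∃ a ∈ t, a ∉ s := not_subset.mp fun hts =>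
      hst (eq_of_subset_of_card_le hts (show #s ≤ #t by omega)).symm
    refine ⟨a, mem_symmDiff.mpr (.inr ⟨hat, has⟩), ?_⟩
    rw [symmDiff_singleton_of_notMem has, card_insert_of_notMem has]
    omega
  · obtain ⟨a, ha⟩ := symmDiff_nonempty.mpr hst
    refine ⟨a, ha, ?_⟩
    by_cases has : a ∈ s
    · have := card_pos.mpr ⟨a, has⟩
      rw [symmDiff_singleton_of_mem has, card_erase_of_mem has]
      omega
    · rw [symmDiff_singleton_of_notMem has, card_insert_of_notMem has]
      omega
  · obtain ⟨a, has, hat⟩ : ∃ a ∈ s, a ∉ t := not_subset.mp fun hst' =>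
      hst (eq_of_subset_of_card_le hst' (show #t ≤ #s by omega))
    refine ⟨a, mem_symmDiff.mpr (.inl ⟨has, hat⟩), ?_⟩
    rw [symmDiff_singleton_of_mem has, card_erase_of_mem has]
    omega

end Toggle

theorem Finset.card_filter_card_mem {α : Type*} [Fintype α] (I : Finset ℕ) :
    #{s : Finset α | #s ∈ I} = ∑ k ∈ I, (Fintype.card α).choose k := by
  rw [card_eq_sum_card_fiberwise (s := {s : Finset α | #s ∈ I}) (f := card) (t := I)
    fun s hs => (mem_filter.mp hs).2]
  refine sum_congr rfl fun k hk => ?_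
  rw [filter_filter, ← card_univ, ← card_powersetCard, powersetCard_eq_filter, powerset_univ]
  congr 1
  ext s
  simp only [mem_filter, mem_univ, true_and, and_iff_right_iff_imp]
  rintro rfl
  exact hk

theorem Finset.sum_Icc_pred_succ {M : Type*} [AddCommMonoid M] (f : ℕ → M) {θ : ℕ} (hθ : 1 ≤ θ) :
    ∑ k ∈ Icc (θ - 1) (θ + 1), f k = f (θ - 1) + f θ + f (θ + 1) := by
  obtain ⟨k, rfl⟩ : ∃ k, θ = k + 1 := ⟨θ - 1, by omega⟩
  simp [sum_Icc_succ_top, add_assoc]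

theorem Nat.choose_pred_add_choose_add_choose_succ (n : ℕ) {θ : ℕ} (hθ : 1 ≤ θ) :
    n.choose (θ - 1) + n.choose θ + n.choose (θ + 1) = (n + 1).choose θ + n.choose (θ + 1) := by
  obtain ⟨k, rfl⟩ : ∃ k, θ = k + 1 := ⟨θ - 1, by omega⟩
  rw [Nat.add_sub_cancel, Nat.choose_succ_succ]

section ColumnSets

variable {n N : ℕ}

def ofColumnSets (c : Fin N → Finset (Fin n)) : Fin n → Fin N → Bool :=
  fun i j => decide (i ∈ c j)

theorem ofColumnSets_injective : Function.Injective (ofColumnSets (n := n) (N := N)) := by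
  intro c c' h
  funext j
  ext i
  simpa [ofColumnSets] using congrFun (congrFun h i) j

theorem colWeight_ofColumnSets (c : Fin N → Finset (Fin n)) (j : Fin N) :
    colWeight (ofColumnSets c) j = #(c j) := by
  simp [colWeight, ofColumnSets]

theorem colWeight_update_ofColumnSets {c c' : Fin N → Finset (Fin n)} {a : Fin n} {j : Fin N}
    (ha : a ∈ c j ∆ c' j) :
    colWeight (Function.update (ofColumnSets c) a (ofColumnSets c' a)) j = #(c j ∆ {a}) := by
  unfold colWeight
  congr 1
  ext i
  rw [mem_symmDiff] at ha
  by_cases hi : i = a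
  · subst hi
    simp only [mem_filter, mem_univ, true_and, Function.update_self, ofColumnSets,
      decide_eq_true_eq, mem_symmDiff, mem_singleton, not_true_eq_false]
    tauto
  · simp [ofColumnSets, mem_symmDiff, hi]

variable (n N) in
def deltaFoolingSet (θ : ℕ) : Finset (Fin n → Fin N → Bool) :=
  (Fintype.piFinset fun _ => {s | #s ∈ Icc (θ - 1) (θ + 1)}).image ofColumnSets

theorem card_deltaFoolingSet (θ : ℕ) :
    #(deltaFoolingSet n N θ) = (∑ k ∈ Icc (θ - 1) (θ + 1), n.choose k) ^ N := by
  rw [deltaFoolingSet, card_image_of_injective _ ofColumnSets_injective, Fintype.card_piFinset,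
    prod_const, card_filter_card_mem, Fintype.card_fin, card_univ, Fintype.card_fin]

theorem isFoolingSet_deltaFoolingSet (θ : ℕ) :
    IsFoolingSet (blockDelta θ) (deltaFoolingSet n N θ : Set (Fin n → Fin N → Bool)) := by
  rintro _ hM _ hM' hne
  obtain ⟨c, hc, rfl⟩ := mem_image.mp hM
  obtain ⟨c', hc', rfl⟩ := mem_image.mp hM'
  obtain ⟨j, hj⟩ := Function.ne_iff.mp (ne_of_apply_ne _ hne)
  obtain ⟨a, ha, htoggle⟩ := exists_mem_symmDiff_card_symmDiff_singleton_eq_iff_ne hj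
    (mem_filter.mp (Fintype.mem_piFinset.mp hc j)).2
    (mem_filter.mp (Fintype.mem_piFinset.mp hc' j)).2
  refine ⟨Function.update (ofColumnSets c) a (ofColumnSets c' a), fun r => ?_, fun h => ?_⟩
  · by_cases hr : r = a
    · subst hr; exact .inr (Function.update_self ..)
    · exact .inl (Function.update_of_ne hr ..)
  · have hj := congrFun h j
    simp only [blockDelta, colWeight_update_ofColumnSets ha, colWeight_ofColumnSets,
      decide_eq_decide] at hj
    exact iff_not_self (hj.symm.trans htoggle)

end ColumnSets

theorem delta_partition_lower_bound_general (n N θ : ℕ)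
    (hθ1 : 1 ≤ θ)
    {ι : Type*} [Fintype ι]
    (A : ι → Fin n → Set (Fin N → Bool))
    (hcover : ⋃ i, {M : Fin n → Fin N → Bool | ∀ r, M r ∈ A i r} = Set.univ)
    (hmono : ∀ i, ∀ M ∈ {M : Fin n → Fin N → Bool | ∀ r, M r ∈ A i r},
                  ∀ M' ∈ {M : Fin n → Fin N → Bool | ∀ r, M r ∈ A i r},
      blockDelta θ M = blockDelta θ M') :
    (n.choose (θ - 1) + n.choose θ + n.choose (θ + 1)) ^ N ≤ Fintype.card ι ∧
    (n.choose (θ - 1) + n.choose θ + n.choose (θ + 1)) ^ N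
      = ((n + 1).choose θ + n.choose (θ + 1)) ^ N := by
  refine ⟨?_, by rw [Nat.choose_pred_add_choose_add_choose_succ n hθ1]⟩
  calc (n.choose (θ - 1) + n.choose θ + n.choose (θ + 1)) ^ N
      = #(deltaFoolingSet n N θ) := by rw [card_deltaFoolingSet, sum_Icc_pred_succ _ hθ1]
    _ ≤ Fintype.card ι :=
      (isFoolingSet_deltaFoolingSet θ).card_le_of_iUnion_eq_univ hcover hmono

/-- Any partition of `({0,1}^N)^n` into `Π_{{θ}}^N`-monochromatic boxes has
at least `(C(n,θ−1) + C(n,θ) + C(n,θ+1))^N = (C(n+1,θ) + C(n,θ+1))^N` parts. -/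
theorem delta_partition_lower_bound (n N θ : ℕ)
    (hn : 2 ≤ n) (hN : 1 ≤ N) (hθ1 : 1 ≤ θ) (hθn : θ ≤ n - 1)
    {ι : Type*} [Fintype ι]
    (A : ι → Fin n → Set (Fin N → Bool))
    (hdisj : ∀ i j, i ≠ j →
      Disjoint {M : Fin n → Fin N → Bool | ∀ r, M r ∈ A i r}
               {M : Fin n → Fin N → Bool | ∀ r, M r ∈ A j r})
    (hcover : ⋃ i, {M : Fin n → Fin N → Bool | ∀ r, M r ∈ A i r} = Set.univ)
    (hmono : ∀ i, ∀ M ∈ {M : Fin n → Fin N → Bool | ∀ r, M r ∈ A i r},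
                  ∀ M' ∈ {M : Fin n → Fin N → Bool | ∀ r, M r ∈ A i r},
      blockDelta θ M = blockDelta θ M') :
    (n.choose (θ - 1) + n.choose θ + n.choose (θ + 1)) ^ N ≤ Fintype.card ι ∧
    (n.choose (θ - 1) + n.choose θ + n.choose (θ + 1)) ^ N
      = ((n + 1).choose θ + n.choose (θ + 1)) ^ N :=
  delta_partition_lower_bound_general n N θ hθ1 A hcover hmono
end

section
/- Fix n ≥ 2, N ≥ 1, and integers 1 ≤ a ≤ b ≤ n−1 with a + b ≥ n. Let E' be the set of n × N Boolean measurement matrices all of whose columns have Hamming weight a−1, a, or b+1. Then E' is a multidimensional fooling set for the block interval function Π_{[a,b]}^N: for any two distinct matrices M₁, M₂ ∈ E' with Π_{[a,b]}^N(M₁) = Π_{[a,b]}^N(M₂), there exists a row index i* such that replacing row i* of one matrix by row i* of the other yields a matrix M* with Π_{[a,b]}^N(M*) ≠ Π_{[a,b]}^N(M₁). -/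
/-- The block interval function `Π_{[a,b]}^N`: its `j`-th coordinate is `1` iff the `j`-th
column of `M` has between `a` and `b` ones. -/
def blockInterval {n N : ℕ} (a b : ℕ) (M : Fin n → Fin N → Bool) : Fin N → Bool :=
  fun j => decide (a ≤ colWeight M j ∧ colWeight M j ≤ b)

theorem exists_eq_true_and_eq_false_of_card_filter_le {ι : Type*} [Fintype ι] {f g : ι → Bool}
    (hfg : f ≠ g)
    (hcard : (Finset.univ.filter fun i => g i = true).card ≤
      (Finset.univ.filter fun i => f i = true).card) :
    ∃ i, f i = true ∧ g i = false := by
  by_contra! h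
  have hsub : (Finset.univ.filter fun i => f i = true) ⊆
      (Finset.univ.filter fun i => g i = true) := by
    intro i hi
    simp only [Finset.mem_filter, Finset.mem_univ, true_and] at hi ⊢
    simpa using h i hi
  have hset := Finset.eq_of_subset_of_card_le hsub hcard
  refine hfg (funext fun i => ?_)
  have hi := congrArg (i ∈ ·) hset
  simp only [Finset.mem_filter, Finset.mem_univ, true_and, eq_iff_iff] at hi
  cases hf : f i <;> cases hg : g i <;> simp_all

section colWeight

variable {n N : ℕ}

theorem colWeight_update_of_eq_false_of_eq_true {M : Fin n → Fin N → Bool} {i : Fin n}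
    {r : Fin N → Bool} {j : Fin N} (hM : M i j = false) (hr : r j = true) :
    colWeight (Function.update M i r) j = colWeight M j + 1 := by
  have hset : (Finset.univ.filter fun i' => Function.update M i r i' j = true) =
      insert i (Finset.univ.filter fun i' => M i' j = true) := by
    ext x
    by_cases hx : x = i <;> simp [hx, hM, hr]
  rw [colWeight, hset, Finset.card_insert_of_notMem (by simp [hM]), colWeight]

theorem colWeight_update_of_eq_true_of_eq_false {M : Fin n → Fin N → Bool} {i : Fin n}
    {r : Fin N → Bool} {j : Fin N} (hM : M i j = true) (hr : r j = false) :
    colWeight (Function.update M i r) j + 1 = colWeight M j := by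
  have hset : (Finset.univ.filter fun i' => Function.update M i r i' j = true) =
      (Finset.univ.filter fun i' => M i' j = true).erase i := by
    ext x
    by_cases hx : x = i <;> simp [hx, hM, hr]
  rw [colWeight, hset, Finset.card_erase_add_one (by simp [hM]), colWeight]

variable {M₁ M₂ : Fin n → Fin N → Bool} {j : Fin N}

theorem exists_colWeight_update_eq_add_one (hw : colWeight M₁ j ≤ colWeight M₂ j)
    (hd : (M₁ · j) ≠ (M₂ · j)) :
    ∃ i, colWeight (Function.update M₁ i (M₂ i)) j = colWeight M₁ j + 1 := by
  obtain ⟨i, h₂, h₁⟩ := exists_eq_true_and_eq_false_of_card_filter_le hd.symm hw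
  exact ⟨i, colWeight_update_of_eq_false_of_eq_true h₁ h₂⟩

theorem exists_colWeight_update_add_one_eq (hw : colWeight M₂ j ≤ colWeight M₁ j)
    (hd : (M₁ · j) ≠ (M₂ · j)) :
    ∃ i, colWeight (Function.update M₁ i (M₂ i)) j + 1 = colWeight M₁ j := by
  obtain ⟨i, h₁, h₂⟩ := exists_eq_true_and_eq_false_of_card_filter_le hd hw
  exact ⟨i, colWeight_update_of_eq_true_of_eq_false h₁ h₂⟩

theorem exists_blockInterval_update_ne {a b : ℕ} (ha : 1 ≤ a) (hab : a ≤ b)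
    (h₁ : colWeight M₁ j = a - 1 ∨ colWeight M₁ j = a ∨ colWeight M₁ j = b + 1)
    (h₂ : colWeight M₂ j = a - 1 ∨ colWeight M₂ j = a ∨ colWeight M₂ j = b + 1)
    (heq : blockInterval a b M₁ j = blockInterval a b M₂ j) (hd : (M₁ · j) ≠ (M₂ · j)) :
    ∃ i, blockInterval a b (Function.update M₁ i (M₂ i)) j ≠ blockInterval a b M₁ j := by
  simp only [blockInterval, decide_eq_decide] at heq
  simp only [blockInterval, ne_eq, decide_eq_decide]
  rcases h₁ with h₁ | h₁ | h₁
  · obtain ⟨i, hi⟩ := exists_colWeight_update_eq_add_one (by omega) hd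
    exact ⟨i, by omega⟩
  · obtain ⟨i, hi⟩ := exists_colWeight_update_add_one_eq (by omega) hd
    exact ⟨i, by omega⟩
  · obtain ⟨i, hi⟩ := exists_colWeight_update_add_one_eq (by omega) hd
    exact ⟨i, by omega⟩

end colWeight

theorem interval_fooling_set_high_general (n N a b : ℕ)
    (ha : 1 ≤ a) (hab : a ≤ b)
    (M₁ M₂ : Fin n → Fin N → Bool)
    (h₁ : ∀ j, colWeight M₁ j = a - 1 ∨ colWeight M₁ j = a ∨ colWeight M₁ j = b + 1)
    (h₂ : ∀ j, colWeight M₂ j = a - 1 ∨ colWeight M₂ j = a ∨ colWeight M₂ j = b + 1)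
    (hne : M₁ ≠ M₂)
    (heq : blockInterval a b M₁ = blockInterval a b M₂) :
    ∃ i : Fin n,
      blockInterval a b (Function.update M₁ i (M₂ i)) ≠ blockInterval a b M₁ ∨
      blockInterval a b (Function.update M₂ i (M₁ i)) ≠ blockInterval a b M₁ := by
  obtain ⟨j, hj⟩ : ∃ j, (M₁ · j) ≠ (M₂ · j) := by
    by_contra! h
    exact hne (funext fun i => funext fun j => congrFun (h j) i)
  obtain ⟨i, hi⟩ := exists_blockInterval_update_ne ha hab (h₁ j) (h₂ j) (congrFun heq j) hj
  exact ⟨i, Or.inl fun h => hi (congrFun h j)⟩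

/-- For `a + b ≥ n`, the set of measurement matrices all of whose columns
have Hamming weight `a−1`, `a` or `b+1` is a multidimensional fooling set for the block
interval function `Π_{[a,b]}^N`. -/
theorem interval_fooling_set_high (n N a b : ℕ)
    (hn : 2 ≤ n) (hN : 1 ≤ N) (ha : 1 ≤ a) (hab : a ≤ b) (hb : b ≤ n - 1)
    (hsum : n ≤ a + b)
    (M₁ M₂ : Fin n → Fin N → Bool)
    (h₁ : ∀ j, colWeight M₁ j = a - 1 ∨ colWeight M₁ j = a ∨ colWeight M₁ j = b + 1)
    (h₂ : ∀ j, colWeight M₂ j = a - 1 ∨ colWeight M₂ j = a ∨ colWeight M₂ j = b + 1)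
    (hne : M₁ ≠ M₂)
    (heq : blockInterval a b M₁ = blockInterval a b M₂) :
    ∃ i : Fin n,
      blockInterval a b (Function.update M₁ i (M₂ i)) ≠ blockInterval a b M₁ ∨
      blockInterval a b (Function.update M₂ i (M₁ i)) ≠ blockInterval a b M₁ :=
  interval_fooling_set_high_general n N a b ha hab M₁ M₂ h₁ h₂ hne heq
end
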